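/- arXiv:1703.05952 — 3 statements merged into one kernel-verified Lean document; each statement's English description precedes it below -/
import Mathlib

section
/- Fix y₀ ∈ [c,b] and a kernel w(x,z) with 0 ≤ w(x,z) ≤ 𝕎(x-z) for all c ≤ z ≤ x ≤ b, where 𝕎 : ℝ → [0,∞) is increasing with 𝕎(u) = 0 for u < 0. Suppose there exist M₃ ≥ sup_{x∈[c,b]} ω(x) and s₀ > 0 with ∫₀^∞ e^{-s₀ u} 𝕎(u) du ≤ 1/(2M₃). If H : [c,b] → ℝ is bounded measurable and satisfies H(x) = ∫_{y₀}^x w(x,z) ω(z) H(z) dz for all x ∈ [c,b], then H ≡ 0 on [y₀,b]. -/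
open MeasureTheory Set Real

/-!
Iterating the inequality `|H x| ≤ L ∫_{y₀}^x |H z| dz`, where `L = 𝕎(b - c) M₃` bounds the kernel
`w(x,z) ω(z)` on the triangle `c ≤ z ≤ x ≤ b`, gives the Picard bound
`|H x| ≤ C (L (x - y₀))ⁿ / n!` for every `n`, and the right-hand side tends to `0`.
-/

open Nat in
theorem integral_mul_pow_div_factorial (K a x : ℝ) (n : ℕ) :
    K * ∫ z in a..x, (K * (z - a)) ^ n / n ! = (K * (x - a)) ^ (n + 1) / (n + 1)! := by
  simp only [mul_pow, div_eq_mul_inv, intervalIntegral.integral_mul_const,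
    intervalIntegral.integral_const_mul, intervalIntegral.integral_comp_sub_right (· ^ n),
    sub_self, integral_pow, Nat.factorial_succ]
  push_cast
  field_simp
  ring

section Gronwall

variable {H : ℝ → ℝ} {a b C K : ℝ}

open Nat in
theorem abs_le_pow_div_factorial_of_abs_le_mul_integral (hK : 0 ≤ K)
    (hC : ∀ x ∈ Icc a b, |H x| ≤ C) (hH : ∀ x ∈ Icc a b, |H x| ≤ K * ∫ z in Ioc a x, |H z|)
    (n : ℕ) : ∀ x ∈ Icc a b, |H x| ≤ C * ((K * (x - a)) ^ n / n !) := by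
  induction n with
  | zero => simpa using hC
  | succ n ih =>
    intro x hx
    have hsub : Ioc a x ⊆ Icc a b := Ioc_subset_Icc_self.trans (Icc_subset_Icc_right hx.2)
    have hmono : ∫ z in Ioc a x, |H z| ≤ ∫ z in Ioc a x, C * ((K * (z - a)) ^ n / n !) :=
      integral_mono_of_nonneg (.of_forall fun z => abs_nonneg (H z))
        (Continuous.integrableOn_Ioc (by fun_prop))
        (ae_restrict_of_forall_mem measurableSet_Ioc fun z hz => ih z (hsub hz))
    calc |H x| ≤ K * ∫ z in Ioc a x, |H z| := hH x hx
      _ ≤ K * ∫ z in Ioc a x, C * ((K * (z - a)) ^ n / n !) := by gcongr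
      _ = C * ((K * (x - a)) ^ (n + 1) / (n + 1)!) := by
        rw [integral_const_mul, ← intervalIntegral.integral_of_le hx.1, mul_left_comm,
          integral_mul_pow_div_factorial]

theorem eq_zero_of_abs_le_mul_integral (hK : 0 ≤ K)
    (hC : ∀ x ∈ Icc a b, |H x| ≤ C) (hH : ∀ x ∈ Icc a b, |H x| ≤ K * ∫ z in Ioc a x, |H z|) :
    ∀ x ∈ Icc a b, H x = 0 := by
  intro x hx
  have hlim := (FloorSemiring.tendsto_pow_div_factorial_atTop (K * (x - a))).const_mul C
  rw [mul_zero] at hlim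
  exact abs_nonpos_iff.mp <| ge_of_tendsto' hlim fun n =>
    abs_le_pow_div_factorial_of_abs_le_mul_integral hK hC hH n x hx

end Gronwall

theorem abs_setIntegral_mul_le {α : Type*} [MeasurableSpace α] {μ : Measure α} {s : Set α}
    {k H : α → ℝ} {L : ℝ} (hs : MeasurableSet s) (hH : IntegrableOn H s μ)
    (hk : ∀ z ∈ s, |k z| ≤ L) : |∫ z in s, k z * H z ∂μ| ≤ L * ∫ z in s, |H z| ∂μ := by
  rw [← norm_eq_abs, ← integral_const_mul]
  refine norm_integral_le_of_norm_le (hH.abs.const_mul L)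
    (ae_restrict_of_forall_mem hs fun z hz => ?_)
  rw [norm_mul, norm_eq_abs, norm_eq_abs]
  exact mul_le_mul_of_nonneg_right (hk z hz) (abs_nonneg _)

theorem stmt_1_general (c b y₀ : ℝ) (hy₀ : y₀ ∈ Set.Icc c b)
    (ω : ℝ → ℝ) (hωpos : ∀ x, 0 ≤ ω x)
    (WW : ℝ → ℝ) (hWWpos : ∀ u, 0 ≤ WW u) (hWWmono : Monotone WW)
    (w : ℝ → ℝ → ℝ)
    (hw : ∀ x z : ℝ, c ≤ z → z ≤ x → x ≤ b → 0 ≤ w x z ∧ w x z ≤ WW (x - z))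
    (M₃ : ℝ)
    (hM₃ : ∀ x ∈ Set.Icc c b, ω x ≤ M₃)
    (H : ℝ → ℝ) (hHm : Measurable H)
    (hHb : ∃ C : ℝ, ∀ x ∈ Set.Icc c b, |H x| ≤ C)
    (heq : ∀ x ∈ Set.Icc c b, H x = ∫ z in Set.Ioc y₀ x, w x z * ω z * H z) :
    ∀ x ∈ Set.Icc y₀ b, H x = 0 := by
  obtain ⟨C, hC⟩ := hHb
  have hIcc : Icc y₀ b ⊆ Icc c b := Icc_subset_Icc_left hy₀.1
  have hM₃0 : 0 ≤ M₃ := (hωpos y₀).trans (hM₃ y₀ hy₀)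
  have hkernel : ∀ x ∈ Icc y₀ b, ∀ z ∈ Ioc y₀ x, |w x z * ω z| ≤ WW (b - c) * M₃ := by
    intro x hx z hz
    have hcz : c ≤ z := hy₀.1.trans hz.1.le
    obtain ⟨hw0, hwW⟩ := hw x z hcz hz.2 hx.2
    rw [abs_of_nonneg (mul_nonneg hw0 (hωpos z))]
    calc w x z * ω z ≤ w x z * M₃ := by gcongr; exact hM₃ z ⟨hcz, hz.2.trans hx.2⟩
      _ ≤ WW (b - c) * M₃ := by gcongr; exact hwW.trans (hWWmono (by linarith [hx.2]))
  have hHint : IntegrableOn H (Icc y₀ b) :=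
    Measure.integrableOn_of_bounded measure_Icc_lt_top.ne hHm.aestronglyMeasurable
      (ae_restrict_of_forall_mem measurableSet_Icc fun x hx => hC x (hIcc hx))
  refine eq_zero_of_abs_le_mul_integral (mul_nonneg (hWWpos (b - c)) hM₃0)
    (fun x hx => hC x (hIcc hx)) fun x hx => ?_
  rw [heq x (hIcc hx)]
  exact abs_setIntegral_mul_le measurableSet_Ioc
    (hHint.mono_set (Ioc_subset_Icc_self.trans (Icc_subset_Icc_right hx.2))) (hkernel x hx)

/-- uniqueness half of the renewal-type equation, Lemma 2.2:
under a Laplace-transform smallness condition on the dominating kernel `𝕎`,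
the only bounded measurable solution of `H(x) = ∫_{y₀}^x w(x,z) ω(z) H(z) dz`
on `[c,b]` is `H ≡ 0` on `[y₀,b]`. -/
theorem stmt_1 (c b y₀ : ℝ) (hcb : c ≤ b) (hy₀ : y₀ ∈ Set.Icc c b)
    (ω : ℝ → ℝ) (hωm : Measurable ω) (hωpos : ∀ x, 0 ≤ ω x)
    (hωloc : ∀ r : ℝ, ∃ C : ℝ, ∀ x : ℝ, |x| ≤ r → ω x ≤ C)
    (WW : ℝ → ℝ) (hWWpos : ∀ u, 0 ≤ WW u) (hWWmono : Monotone WW)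
    (hWW0 : ∀ u : ℝ, u < 0 → WW u = 0)
    (w : ℝ → ℝ → ℝ) (hwm : Measurable (Function.uncurry w))
    (hw : ∀ x z : ℝ, c ≤ z → z ≤ x → x ≤ b → 0 ≤ w x z ∧ w x z ≤ WW (x - z))
    (M₃ s₀ : ℝ) (hs₀ : 0 < s₀)
    (hM₃ : ∀ x ∈ Set.Icc c b, ω x ≤ M₃)
    (hlap : ∫ u in Set.Ioi (0:ℝ), Real.exp (-s₀ * u) * WW u ≤ 1 / (2 * M₃))
    (H : ℝ → ℝ) (hHm : Measurable H)
    (hHb : ∃ C : ℝ, ∀ x ∈ Set.Icc c b, |H x| ≤ C)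
    (heq : ∀ x ∈ Set.Icc c b, H x = ∫ z in Set.Ioc y₀ x, w x z * ω z * H z) :
    ∀ x ∈ Set.Icc y₀ b, H x = 0 :=
  stmt_1_general c b y₀ hy₀ ω hωpos WW hWWpos hWWmono w hw M₃ hM₃ H hHm hHb heq
end

section
/- Let ω₁, ω₂ : ℝ → [0,∞) be locally bounded measurable, and let w^{(ω₁)}, w^{(ω₂)} be the unique locally bounded solutions of w^{(ωᵢ)}(x,y) = w(x,y) + ∫_y^x w(x,z) ωᵢ(z) w^{(ωᵢ)}(z,y) dz vanishing for x < y. Then for all x ≥ y: w^{(ω₂)}(x,y) - w^{(ω₁)}(x,y) = ∫_y^x w^{(ω₁)}(x,z) (ω₂(z) - ω₁(z)) w^{(ω₂)}(z,y) dz. -/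
open MeasureTheory Set Real

/-! Write `K ⋆_ϖ L` for `volterraComp K ϖ L`, i.e. `(x, y) ↦ ∫_{(y,x]} K(x,z) ϖ(z) L(z,y) dz`,
so that the two renewal equations read `W₂ - w = w ⋆_{ω₂} W₂` and `W₁ - w = W₁ ⋆_{ω₁} w`.
For locally bounded measurable kernels and weights this composition is linear in each slot and
associative (Fubini on the triangle `y < z < u ≤ x`), hence
`W₁ ⋆_{ω₂} W₂ = w ⋆_{ω₂} W₂ + (W₁ ⋆_{ω₁} w) ⋆_{ω₂} W₂ = (W₂ - w) + W₁ ⋆_{ω₁} (W₂ - w)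
  = W₂ - W₁ + W₁ ⋆_{ω₁} W₂`,
and subtracting `W₁ ⋆_{ω₁} W₂` gives the resolvent identity. -/

def IsLocallyBoundedKernel (K : ℝ → ℝ → ℝ) : Prop :=
  ∀ r : ℝ, ∃ C : ℝ, ∀ x y : ℝ, |x| ≤ r → |y| ≤ r → |K x y| ≤ C

def IsLocallyBoundedFun (ϖ : ℝ → ℝ) : Prop :=
  ∀ r : ℝ, ∃ C : ℝ, ∀ z : ℝ, |z| ≤ r → |ϖ z| ≤ C

lemma isLocallyBoundedFun_of_nonneg {ϖ : ℝ → ℝ} (h₀ : ∀ z, 0 ≤ ϖ z)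
    (h : ∀ r : ℝ, ∃ C : ℝ, ∀ z : ℝ, |z| ≤ r → ϖ z ≤ C) : IsLocallyBoundedFun ϖ := fun r => by
  obtain ⟨C, hC⟩ := h r
  exact ⟨C, fun z hz => (abs_of_nonneg (h₀ z)).trans_le (hC z hz)⟩

lemma abs_le_max_abs_of_mem_Ioc {x y z : ℝ} (hz : z ∈ Ioc y x) : |z| ≤ max |y| |x| :=
  abs_le_max_abs_abs hz.1.le hz.2

lemma integrableOn_of_norm_le {α : Type*} [MeasurableSpace α] {μ : Measure α} {s : Set α}
    {f : α → ℝ} (hs : MeasurableSet s) (hμ : μ s < ⊤) (hf : Measurable f) (C : ℝ)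
    (hC : ∀ p ∈ s, ‖f p‖ ≤ C) : IntegrableOn f s μ :=
  .of_bound hμ hf.aestronglyMeasurable.restrict C
    ((ae_restrict_mem hs).mono fun p hp => hC p hp)

lemma setIntegral_Ioc_Ioc_swap {x y : ℝ} {f : ℝ → ℝ → ℝ}
    (hf : IntegrableOn (Function.uncurry f) (Ioc y x ×ˢ Ioc y x)) :
    ∫ z in Ioc y x, ∫ u in Ioc z x, f z u = ∫ u in Ioc y x, ∫ z in Ioo y u, f z u := by
  set g : ℝ → ℝ → ℝ := fun z u => if z < u then f z u else 0
  have hg : Integrable (Function.uncurry g)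
      ((volume.restrict (Ioc y x)).prod (volume.restrict (Ioc y x))) := by
    rw [Measure.prod_restrict, ← Measure.volume_eq_prod]
    refine (hf.indicator (measurableSet_lt measurable_fst measurable_snd)).congr ?_
    refine Filter.Eventually.of_forall fun p => ?_
    simp [g, Function.uncurry, indicator_apply]
  calc ∫ z in Ioc y x, ∫ u in Ioc z x, f z u
      = ∫ z in Ioc y x, ∫ u in Ioc y x, g z u := by
        refine setIntegral_congr_fun measurableSet_Ioc fun z hz => ?_
        have : Ioc y x ∩ Ioi z = Ioc z x := by
          rw [Ioc_inter_Ioi, max_eq_right hz.1.le]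
        rw [← this, ← setIntegral_indicator measurableSet_Ioi]
        simp [g, indicator_apply]
    _ = ∫ u in Ioc y x, ∫ z in Ioc y x, g z u := integral_integral_swap hg
    _ = ∫ u in Ioc y x, ∫ z in Ioo y u, f z u := by
        refine setIntegral_congr_fun measurableSet_Ioc fun u hu => ?_
        have : Ioc y x ∩ Iio u = Ioo y u := by
          ext z
          simp only [mem_inter_iff, mem_Ioc, mem_Iio, mem_Ioo]
          constructor
          · rintro ⟨⟨h₁, -⟩, h₂⟩; exact ⟨h₁, h₂⟩
          · rintro ⟨h₁, h₂⟩; exact ⟨⟨h₁, h₂.le.trans hu.2⟩, h₂⟩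
        rw [← this, ← setIntegral_indicator measurableSet_Iio]
        simp [g, indicator_apply]

noncomputable def volterraComp (K : ℝ → ℝ → ℝ) (ϖ : ℝ → ℝ) (L : ℝ → ℝ → ℝ) (x y : ℝ) : ℝ :=
  ∫ z in Ioc y x, K x z * ϖ z * L z y

section

variable {K L M : ℝ → ℝ → ℝ} {α β : ℝ → ℝ}

lemma integrableOn_volterraComp_integrand
    (hK : Measurable (Function.uncurry K)) (hKb : IsLocallyBoundedKernel K)
    (hα : Measurable α) (hαb : IsLocallyBoundedFun α)
    (hL : Measurable (Function.uncurry L)) (hLb : IsLocallyBoundedKernel L) (x y : ℝ) :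
    IntegrableOn (fun z => K x z * α z * L z y) (Ioc y x) := by
  set r := max |y| |x|
  obtain ⟨CK, hCK⟩ := hKb r
  obtain ⟨Cα, hCα⟩ := hαb r
  obtain ⟨CL, hCL⟩ := hLb r
  have hx : |x| ≤ r := le_max_right _ _
  have hy : |y| ≤ r := le_max_left _ _
  refine integrableOn_of_norm_le measurableSet_Ioc measure_Ioc_lt_top
    ((hK.of_uncurry_left.mul hα).mul hL.of_uncurry_right) (CK * Cα * CL) fun z hz => ?_
  have hz := abs_le_max_abs_of_mem_Ioc hz
  exact norm_mul_le_of_le (norm_mul_le_of_le (hCK x z hx hz) (hCα z hz)) (hCL z y hz hy)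

lemma volterraComp_sub_left
    (hK : Measurable (Function.uncurry K)) (hKb : IsLocallyBoundedKernel K)
    (hM : Measurable (Function.uncurry M)) (hMb : IsLocallyBoundedKernel M)
    (hα : Measurable α) (hαb : IsLocallyBoundedFun α)
    (hL : Measurable (Function.uncurry L)) (hLb : IsLocallyBoundedKernel L) :
    volterraComp (K - M) α L = volterraComp K α L - volterraComp M α L := by
  ext x y
  rw [Pi.sub_apply, Pi.sub_apply, volterraComp, volterraComp, volterraComp, ← integral_sub
    (integrableOn_volterraComp_integrand hK hKb hα hαb hL hLb x y)
    (integrableOn_volterraComp_integrand hM hMb hα hαb hL hLb x y)]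
  simp only [Pi.sub_apply, sub_mul]

lemma volterraComp_sub_right
    (hK : Measurable (Function.uncurry K)) (hKb : IsLocallyBoundedKernel K)
    (hα : Measurable α) (hαb : IsLocallyBoundedFun α)
    (hL : Measurable (Function.uncurry L)) (hLb : IsLocallyBoundedKernel L)
    (hM : Measurable (Function.uncurry M)) (hMb : IsLocallyBoundedKernel M) :
    volterraComp K α (L - M) = volterraComp K α L - volterraComp K α M := by
  ext x y
  rw [Pi.sub_apply, Pi.sub_apply, volterraComp, volterraComp, volterraComp, ← integral_sub
    (integrableOn_volterraComp_integrand hK hKb hα hαb hL hLb x y)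
    (integrableOn_volterraComp_integrand hK hKb hα hαb hM hMb x y)]
  simp only [Pi.sub_apply, mul_sub]

lemma volterraComp_sub_weight
    (hK : Measurable (Function.uncurry K)) (hKb : IsLocallyBoundedKernel K)
    (hα : Measurable α) (hαb : IsLocallyBoundedFun α)
    (hβ : Measurable β) (hβb : IsLocallyBoundedFun β)
    (hL : Measurable (Function.uncurry L)) (hLb : IsLocallyBoundedKernel L) :
    volterraComp K (α - β) L = volterraComp K α L - volterraComp K β L := by
  ext x y
  rw [Pi.sub_apply, Pi.sub_apply, volterraComp, volterraComp, volterraComp, ← integral_sub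
    (integrableOn_volterraComp_integrand hK hKb hα hαb hL hLb x y)
    (integrableOn_volterraComp_integrand hK hKb hβ hβb hL hLb x y)]
  simp only [Pi.sub_apply, mul_sub, sub_mul]

lemma volterraComp_assoc
    (hK : Measurable (Function.uncurry K)) (hKb : IsLocallyBoundedKernel K)
    (hα : Measurable α) (hαb : IsLocallyBoundedFun α)
    (hL : Measurable (Function.uncurry L)) (hLb : IsLocallyBoundedKernel L)
    (hβ : Measurable β) (hβb : IsLocallyBoundedFun β)
    (hM : Measurable (Function.uncurry M)) (hMb : IsLocallyBoundedKernel M) :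
    volterraComp (volterraComp K α L) β M = volterraComp K α (volterraComp L β M) := by
  ext x y
  set r := max |y| |x|
  obtain ⟨CK, hCK⟩ := hKb r
  obtain ⟨Cα, hCα⟩ := hαb r
  obtain ⟨CL, hCL⟩ := hLb r
  obtain ⟨Cβ, hCβ⟩ := hβb r
  obtain ⟨CM, hCM⟩ := hMb r
  have hx : |x| ≤ r := le_max_right _ _
  have hy : |y| ≤ r := le_max_left _ _
  have hint : IntegrableOn (fun p : ℝ × ℝ => K x p.2 * α p.2 * (L p.2 p.1 * β p.1 * M p.1 y))
      (Ioc y x ×ˢ Ioc y x) := by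
    refine integrableOn_of_norm_le (measurableSet_Ioc.prod measurableSet_Ioc)
      ?_ ?_ (CK * Cα * (CL * Cβ * CM)) ?_
    · rw [Measure.volume_eq_prod, Measure.prod_prod]
      exact ENNReal.mul_lt_top measure_Ioc_lt_top measure_Ioc_lt_top
    · exact ((hK.of_uncurry_left.comp measurable_snd).mul (hα.comp measurable_snd)).mul
        (((hL.comp measurable_swap).mul (hβ.comp measurable_fst)).mul
          (hM.of_uncurry_right.comp measurable_fst))
    · rintro ⟨z, u⟩ ⟨hz, hu⟩
      have hz := abs_le_max_abs_of_mem_Ioc hz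
      have hu := abs_le_max_abs_of_mem_Ioc hu
      exact norm_mul_le_of_le (norm_mul_le_of_le (hCK x u hx hu) (hCα u hu))
        (norm_mul_le_of_le (norm_mul_le_of_le (hCL u z hu hz) (hCβ z hz)) (hCM z y hz hy))
  calc ∫ z in Ioc y x, (∫ u in Ioc z x, K x u * α u * L u z) * β z * M z y
      = ∫ z in Ioc y x, ∫ u in Ioc z x, K x u * α u * (L u z * β z * M z y) := by
        refine setIntegral_congr_fun measurableSet_Ioc fun z _ => ?_
        simp only [mul_assoc, ← integral_mul_const]
    _ = ∫ u in Ioc y x, ∫ z in Ioo y u, K x u * α u * (L u z * β z * M z y) :=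
        setIntegral_Ioc_Ioc_swap hint
    _ = ∫ u in Ioc y x, K x u * α u * ∫ z in Ioc y u, L u z * β z * M z y := by
        refine setIntegral_congr_fun measurableSet_Ioc fun u _ => ?_
        rw [← integral_Ioc_eq_integral_Ioo, integral_const_mul]

end

theorem stmt_4_general (w : ℝ → ℝ → ℝ) (hwm : Measurable (Function.uncurry w))
    (hwloc : ∀ r : ℝ, ∃ C : ℝ, ∀ x y : ℝ, |x| ≤ r → |y| ≤ r → |w x y| ≤ C)
    (ω₁ ω₂ : ℝ → ℝ) (hω₁m : Measurable ω₁) (hω₂m : Measurable ω₂)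
    (hω₁pos : ∀ z, 0 ≤ ω₁ z) (hω₂pos : ∀ z, 0 ≤ ω₂ z)
    (hω₁loc : ∀ r : ℝ, ∃ C : ℝ, ∀ z : ℝ, |z| ≤ r → ω₁ z ≤ C)
    (hω₂loc : ∀ r : ℝ, ∃ C : ℝ, ∀ z : ℝ, |z| ≤ r → ω₂ z ≤ C)
    (W₁ W₂ : ℝ → ℝ → ℝ)
    (hW₁m : Measurable (Function.uncurry W₁)) (hW₂m : Measurable (Function.uncurry W₂))
    (hW₁loc : ∀ r : ℝ, ∃ C : ℝ, ∀ x y : ℝ, |x| ≤ r → |y| ≤ r → |W₁ x y| ≤ C)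
    (hW₂loc : ∀ r : ℝ, ∃ C : ℝ, ∀ x y : ℝ, |x| ≤ r → |y| ≤ r → |W₂ x y| ≤ C)
    (hW₂eq : ∀ x y : ℝ,
      W₂ x y = w x y + ∫ z in Set.Ioc y x, w x z * ω₂ z * W₂ z y)
    -- the transposed-equation identity for `W₁` (Lemma 2.2) may be assumed:
    (htrans : ∀ x y : ℝ,
      W₁ x y = w x y + ∫ z in Set.Ioc y x, W₁ x z * ω₁ z * w z y) :
    ∀ x y : ℝ, y ≤ x →
      W₂ x y - W₁ x y
        = ∫ z in Set.Ioc y x, W₁ x z * (ω₂ z - ω₁ z) * W₂ z y := by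
  have hω₁b := isLocallyBoundedFun_of_nonneg hω₁pos hω₁loc
  have hω₂b := isLocallyBoundedFun_of_nonneg hω₂pos hω₂loc
  have hW₂ : W₂ - w = volterraComp w ω₂ W₂ := by
    ext x y
    rw [Pi.sub_apply, Pi.sub_apply, hW₂eq x y, add_sub_cancel_left, volterraComp]
  have hW₁ : W₁ - w = volterraComp W₁ ω₁ w := by
    ext x y
    rw [Pi.sub_apply, Pi.sub_apply, htrans x y, add_sub_cancel_left, volterraComp]
  have key : volterraComp W₁ ω₂ W₂ = (W₂ - w) + (volterraComp W₁ ω₁ W₂ - (W₁ - w)) :=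
    calc volterraComp W₁ ω₂ W₂ = volterraComp w ω₂ W₂ + volterraComp (W₁ - w) ω₂ W₂ := by
          rw [volterraComp_sub_left hW₁m hW₁loc hwm hwloc hω₂m hω₂b hW₂m hW₂loc]
          abel
      _ = (W₂ - w) + volterraComp W₁ ω₁ (W₂ - w) := by
          rw [hW₁, volterraComp_assoc hW₁m hW₁loc hω₁m hω₁b hwm hwloc hω₂m hω₂b hW₂m hW₂loc,
            ← hW₂]
      _ = (W₂ - w) + (volterraComp W₁ ω₁ W₂ - (W₁ - w)) := by
          rw [volterraComp_sub_right hW₁m hW₁loc hω₁m hω₁b hW₂m hW₂loc hwm hwloc, ← hW₁]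
  have hres : volterraComp W₁ (ω₂ - ω₁) W₂ = W₂ - W₁ := by
    rw [volterraComp_sub_weight hW₁m hW₁loc hω₂m hω₂b hω₁m hω₁b hW₂m hW₂loc, key]
    abel
  intro x y _
  exact (congrFun (congrFun hres x) y).symm

/-- resolvent identity, Proposition 3.2 for `w`:
`w^{(ω₂)}(x,y) - w^{(ω₁)}(x,y) = ∫_y^x w^{(ω₁)}(x,z)(ω₂(z)-ω₁(z)) w^{(ω₂)}(z,y) dz`. -/
theorem stmt_4 (w : ℝ → ℝ → ℝ) (hwm : Measurable (Function.uncurry w))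
    (hwloc : ∀ r : ℝ, ∃ C : ℝ, ∀ x y : ℝ, |x| ≤ r → |y| ≤ r → |w x y| ≤ C)
    (hw0 : ∀ x y : ℝ, x < y → w x y = 0)
    (ω₁ ω₂ : ℝ → ℝ) (hω₁m : Measurable ω₁) (hω₂m : Measurable ω₂)
    (hω₁pos : ∀ z, 0 ≤ ω₁ z) (hω₂pos : ∀ z, 0 ≤ ω₂ z)
    (hω₁loc : ∀ r : ℝ, ∃ C : ℝ, ∀ z : ℝ, |z| ≤ r → ω₁ z ≤ C)
    (hω₂loc : ∀ r : ℝ, ∃ C : ℝ, ∀ z : ℝ, |z| ≤ r → ω₂ z ≤ C)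
    (W₁ W₂ : ℝ → ℝ → ℝ)
    (hW₁m : Measurable (Function.uncurry W₁)) (hW₂m : Measurable (Function.uncurry W₂))
    (hW₁loc : ∀ r : ℝ, ∃ C : ℝ, ∀ x y : ℝ, |x| ≤ r → |y| ≤ r → |W₁ x y| ≤ C)
    (hW₂loc : ∀ r : ℝ, ∃ C : ℝ, ∀ x y : ℝ, |x| ≤ r → |y| ≤ r → |W₂ x y| ≤ C)
    (hW₁0 : ∀ x y : ℝ, x < y → W₁ x y = 0)
    (hW₂0 : ∀ x y : ℝ, x < y → W₂ x y = 0)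
    (hW₁eq : ∀ x y : ℝ,
      W₁ x y = w x y + ∫ z in Set.Ioc y x, w x z * ω₁ z * W₁ z y)
    (hW₂eq : ∀ x y : ℝ,
      W₂ x y = w x y + ∫ z in Set.Ioc y x, w x z * ω₂ z * W₂ z y)
    -- the transposed-equation identity for `W₁` (Lemma 2.2) may be assumed:
    (htrans : ∀ x y : ℝ,
      W₁ x y = w x y + ∫ z in Set.Ioc y x, W₁ x z * ω₁ z * w z y)
    -- uniqueness of locally bounded solutions may be assumed:
    (huniq : ∀ (h : ℝ → ℝ → ℝ) (H₁ H₂ : ℝ → ℝ → ℝ) (ϖ : ℝ → ℝ),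
      (∀ r : ℝ, ∃ C : ℝ, ∀ x y : ℝ, |x| ≤ r → |y| ≤ r → |H₁ x y| ≤ C) →
      (∀ r : ℝ, ∃ C : ℝ, ∀ x y : ℝ, |x| ≤ r → |y| ≤ r → |H₂ x y| ≤ C) →
      (∀ x y : ℝ, x ≤ y → H₁ x y = h x y) →
      (∀ x y : ℝ, x ≤ y → H₂ x y = h x y) →
      (∀ x y : ℝ, H₁ x y = h x y + ∫ z in Set.Ioc y x, w x z * ϖ z * H₁ z y) →
      (∀ x y : ℝ, H₂ x y = h x y + ∫ z in Set.Ioc y x, w x z * ϖ z * H₂ z y) →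
      H₁ = H₂) :
    ∀ x y : ℝ, y ≤ x →
      W₂ x y - W₁ x y
        = ∫ z in Set.Ioc y x, W₁ x z * (ω₂ z - ω₁ z) * W₂ z y :=
  stmt_4_general w hwm hwloc ω₁ ω₂ hω₁m hω₂m hω₁pos hω₂pos hω₁loc hω₂loc W₁ W₂ hW₁m hW₂m hW₁loc
    hW₂loc hW₂eq htrans
end

section
/- Let ω be locally bounded nonnegative and let W^{(ω)}(·,y) be the unique locally bounded solution of W^{(ω)}(x,y) = W(x-y) + ∫_y^x W(x-z) ω(z) W^{(ω)}(z,y) dz vanishing for x < y, where W is a continuous increasing function vanishing on (-∞,0). Then for each fixed y, the function x ↦ W^{(ω)}(x,y) is increasing on [y,∞). -/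
open MeasureTheory Set Real

lemma integral_Ioc_pow_sub (y x : ℝ) (h : y ≤ x) (n : ℕ) :
    ∫ z in Set.Ioc y x, (z - y) ^ n = (x - y) ^ (n + 1) / (n + 1) := by
  rw [← intervalIntegral.integral_of_le h]
  have := intervalIntegral.integral_comp_sub_right (a := y) (b := x) (fun t => t ^ n) y
  rw [this, integral_pow]
  simp

/-- for each fixed `y`, the generalized scale function
`x ↦ W^{(ω)}(x,y)` is increasing on `[y,∞)`. -/
theorem stmt_10 (W : ℝ → ℝ) (hWc : Continuous W) (hWmono : Monotone W)
    (hWpos : ∀ u : ℝ, 0 ≤ W u) (hW0 : ∀ u : ℝ, u < 0 → W u = 0)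
    (ω : ℝ → ℝ) (hωm : Measurable ω) (hωpos : ∀ z, 0 ≤ ω z)
    (hωloc : ∀ r : ℝ, ∃ C : ℝ, ∀ z : ℝ, |z| ≤ r → ω z ≤ C)
    (Wω : ℝ → ℝ → ℝ) (hWωm : Measurable (Function.uncurry Wω))
    (hWωloc : ∀ r : ℝ, ∃ C : ℝ, ∀ x y : ℝ, |x| ≤ r → |y| ≤ r → |Wω x y| ≤ C)
    (hWω0 : ∀ x y : ℝ, x < y → Wω x y = 0)
    (hWωeq : ∀ x y : ℝ,
      Wω x y = W (x - y) + ∫ z in Set.Ioc y x, W (x - z) * ω z * Wω z y)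
    -- uniqueness of locally bounded solutions to the renewal-type equation:
    (huniq : ∀ H₁ H₂ : ℝ → ℝ → ℝ,
      (∀ r : ℝ, ∃ C : ℝ, ∀ x y : ℝ, |x| ≤ r → |y| ≤ r → |H₁ x y| ≤ C) →
      (∀ r : ℝ, ∃ C : ℝ, ∀ x y : ℝ, |x| ≤ r → |y| ≤ r → |H₂ x y| ≤ C) →
      (∀ x y : ℝ, x < y → H₁ x y = 0) →
      (∀ x y : ℝ, x < y → H₂ x y = 0) →
      (∀ x y : ℝ, H₁ x y = W (x - y) + ∫ z in Set.Ioc y x, W (x - z) * ω z * H₁ z y) →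
      (∀ x y : ℝ, H₂ x y = W (x - y) + ∫ z in Set.Ioc y x, W (x - z) * ω z * H₂ z y) →
      H₁ = H₂) :
    ∀ y : ℝ, MonotoneOn (fun x => Wω x y) (Set.Ici y) := by
  intro y
  -- measurability of sections
  have hmeas : Measurable (fun z => Wω z y) :=
    hWωm.comp (measurable_id.prodMk measurable_const)
  -- integrability of the integrand over bounded intervals
  have hInt : ∀ x : ℝ, IntegrableOn (fun z => W (x - z) * ω z * Wω z y) (Set.Ioc y x) := by
    intro x
    rcases le_or_gt x y with h | h
    · rw [Set.Ioc_eq_empty (by exact not_lt.mpr h)]; exact integrableOn_empty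
    · set r : ℝ := max |y| |x| with hr
      obtain ⟨Cω, hCω⟩ := hωloc r
      obtain ⟨CW, hCW⟩ := hWωloc r
      have hyr : |y| ≤ r := le_max_left _ _
      have hxr : |x| ≤ r := le_max_right _ _
      have hzr : ∀ z ∈ Set.Ioc y x, |z| ≤ r := by
        intro z hz
        rw [abs_le]
        constructor
        · have := neg_abs_le y; linarith [hz.1]
        · have := le_abs_self x; linarith [hz.2]
      have hmι : AEStronglyMeasurable (fun z => W (x - z) * ω z * Wω z y)
          (volume : Measure ℝ) :=
        (((hWc.measurable.comp (measurable_const.sub measurable_id)).mul hωm).mul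
          hmeas).aestronglyMeasurable
      refine Measure.integrableOn_of_bounded (M := W (x - y) * |Cω| * |CW|)
        (by simp [measure_Ioc_lt_top.ne]) hmι ?_
      rw [ae_restrict_iff' measurableSet_Ioc]
      refine ae_of_all _ (fun z hz => ?_)
      have h1 : W (x - z) ≤ W (x - y) := hWmono (by linarith [hz.1])
      have h2 : ω z ≤ |Cω| := (hCω z (hzr z hz)).trans (le_abs_self _)
      have h3 : |Wω z y| ≤ |CW| := (hCW z y (hzr z hz) hyr).trans (le_abs_self _)
      have : ‖W (x - z) * ω z * Wω z y‖ = W (x - z) * ω z * |Wω z y| := by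
        rw [Real.norm_eq_abs, abs_mul, abs_mul,
          abs_of_nonneg (hWpos _), abs_of_nonneg (hωpos _)]
      rw [this]
      have hW0' : 0 ≤ W (x - z) := hWpos _
      have hω0' : 0 ≤ ω z := hωpos _
      calc W (x - z) * ω z * |Wω z y| ≤ W (x - y) * |Cω| * |Wω z y| := by
            apply mul_le_mul_of_nonneg_right _ (abs_nonneg _)
            exact mul_le_mul h1 h2 hω0' (hWpos _)
        _ ≤ W (x - y) * |Cω| * |CW| := by
            apply mul_le_mul_of_nonneg_left h3
            exact mul_nonneg (hWpos _) (abs_nonneg _)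
  -- nonnegativity of Wω · y
  have hnonneg : ∀ x : ℝ, 0 ≤ Wω x y := by
    intro x
    rcases lt_or_ge x y with h | h
    · rw [hWω0 x y h]
    · set r : ℝ := max |y| |x| with hr
      obtain ⟨Cω, hCω⟩ := hωloc r
      obtain ⟨CW, hCW⟩ := hWωloc r
      have hyr : |y| ≤ r := le_max_left _ _
      have hxr : |x| ≤ r := le_max_right _ _
      have hzr : ∀ z, y ≤ z → z ≤ x → |z| ≤ r := by
        intro z hz1 hz2
        rw [abs_le]
        constructor
        · have := neg_abs_le y; linarith
        · have := le_abs_self x; linarith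
      have hCω0 : 0 ≤ Cω := le_trans (hωpos y) (hCω y hyr)
      have hCW0 : 0 ≤ CW := le_trans (abs_nonneg _) (hCW y y hyr hyr)
      set K : ℝ := W (x - y) * Cω with hK
      have hK0 : 0 ≤ K := mul_nonneg (hWpos _) hCω0
      clear_value K
      -- Gronwall iteration
      have key : ∀ n : ℕ, ∀ t : ℝ, y ≤ t → t ≤ x →
          -(Wω t y) ≤ CW * (K * (t - y)) ^ n / n.factorial := by
        intro n
        induction n with
        | zero =>
          intro t ht1 ht2
          simp only [pow_zero, Nat.factorial_zero, Nat.cast_one, mul_one, div_one]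
          have := hCW t y (hzr t ht1 ht2) hyr
          have := neg_abs_le (Wω t y)
          linarith
        | succ n ih =>
          intro t ht1 ht2
          have heq := hWωeq t y
          set f : ℝ → ℝ := fun z => CW * (K * (z - y)) ^ n / n.factorial with hfdef
          have hf0 : ∀ z : ℝ, y ≤ z → 0 ≤ f z := fun z hz =>
            div_nonneg (mul_nonneg hCW0 (pow_nonneg (mul_nonneg hK0 (by linarith)) n))
              (Nat.cast_nonneg _)
          have hbound : ∀ z ∈ Set.Ioc y t,
              -(W (t - z) * ω z * Wω z y) ≤ K * f z := by
            intro z hz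
            have hz1 : y ≤ z := le_of_lt hz.1
            have hz2 : z ≤ x := le_trans hz.2 ht2
            have ihz : -(Wω z y) ≤ f z := ih z hz1 (hz.2.trans ht2)
            have hWz : 0 ≤ W (t - z) * ω z := mul_nonneg (hWpos _) (hωpos _)
            have hKz : W (t - z) * ω z ≤ K := by
              rw [hK]
              exact mul_le_mul (hWmono (by linarith [hz.1])) (hCω z (hzr z hz1 hz2))
                (hωpos z) (hWpos _)
            calc -(W (t - z) * ω z * Wω z y) = (W (t - z) * ω z) * (-(Wω z y)) := by ring
              _ ≤ (W (t - z) * ω z) * f z := mul_le_mul_of_nonneg_left ihz hWz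
              _ ≤ K * f z := mul_le_mul_of_nonneg_right hKz (hf0 z hz1)
          have hintf : IntegrableOn (fun z => K * f z) (Set.Ioc y t) := by
            apply Continuous.integrableOn_Ioc
            rw [hfdef]
            exact continuous_const.mul
              ((continuous_const.mul
                ((continuous_const.mul (continuous_id.sub continuous_const)).pow n)).div_const _)
          have hmono' : (∫ z in Set.Ioc y t, -(W (t - z) * ω z * Wω z y))
              ≤ ∫ z in Set.Ioc y t, K * f z :=
            setIntegral_mono_on (hInt t).neg hintf measurableSet_Ioc hbound
          have hcalc : (∫ z in Set.Ioc y t, K * f z)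
              = CW * (K * (t - y)) ^ (n + 1) / (n + 1).factorial := by
            have hrw : (fun z => K * f z)
                = fun z => (K * CW * K ^ n / n.factorial) * (z - y) ^ n := by
              funext z
              rw [hfdef]
              simp only [mul_pow]
              ring
            rw [hrw, integral_const_mul, integral_Ioc_pow_sub y t ht1 n]
            rw [Nat.factorial_succ, mul_pow]
            push_cast
            have h1 : (n.factorial : ℝ) ≠ 0 := Nat.cast_ne_zero.mpr n.factorial_ne_zero
            have h2 : (n : ℝ) + 1 ≠ 0 := by positivity
            field_simp
            ring
          have hneg : (∫ z in Set.Ioc y t, -(W (t - z) * ω z * Wω z y))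
              = -∫ z in Set.Ioc y t, W (t - z) * ω z * Wω z y := integral_neg _
          have hWty : 0 ≤ W (t - y) := hWpos _
          linarith [hmono', hcalc.le, hcalc.ge]
      have hten : Filter.Tendsto (fun n : ℕ => CW * (K * (x - y)) ^ n / n.factorial)
          Filter.atTop (nhds 0) := by
        have := (FloorSemiring.tendsto_pow_div_factorial_atTop (K := ℝ) (K * (x - y))).const_mul CW
        simpa [mul_div_assoc] using this
      have := ge_of_tendsto' hten (fun n => key n x h le_rfl)
      linarith
  -- monotonicity
  intro a ha b hb hab
  simp only
  rw [hWωeq a y, hWωeq b y]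
  have h1 : W (a - y) ≤ W (b - y) := hWmono (by linarith)
  have h2 : (∫ z in Set.Ioc y a, W (a - z) * ω z * Wω z y)
      ≤ ∫ z in Set.Ioc y b, W (b - z) * ω z * Wω z y := by
    have hsub : Set.Ioc y a ⊆ Set.Ioc y b := Set.Ioc_subset_Ioc_right hab
    have step1 : (∫ z in Set.Ioc y a, W (a - z) * ω z * Wω z y)
        ≤ ∫ z in Set.Ioc y a, W (b - z) * ω z * Wω z y := by
      refine setIntegral_mono_on (hInt a) ((hInt b).mono_set hsub) measurableSet_Ioc ?_
      intro z hz
      apply mul_le_mul_of_nonneg_right _ (hnonneg z)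
      exact mul_le_mul_of_nonneg_right (hWmono (by linarith)) (hωpos z)
    have step2 : (∫ z in Set.Ioc y a, W (b - z) * ω z * Wω z y)
        ≤ ∫ z in Set.Ioc y b, W (b - z) * ω z * Wω z y := by
      apply setIntegral_mono_set (hInt b)
      · refine ae_of_all _ (fun z => ?_)
        exact mul_nonneg (mul_nonneg (hWpos _) (hωpos _)) (hnonneg _)
      · exact HasSubset.Subset.eventuallyLE hsub
    linarith
  linarith
end
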